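/- Let P, Q, L be real n×n matrices with P = Pᵀ, Q = Qᵀ and L invertible, with associated quadratic form W(x,x') = ½⟨Px,x⟩ − ⟨Lx,x'⟩ + ½⟨Qx',x'⟩ and free symplectic matrix S_W. Fix a complex number c with |c| = 1 and define, for f a Schwartz function on ℝⁿ, (Ŝf)(x) = c·(2π)^{−n/2}·|det L|^{1/2}·∫_{ℝⁿ} e^{iW(x,x')} f(x') dx'. Then for every z ∈ ℝ²ⁿ and every Schwartz function f, Ŝ(T(z)f) = T(S_W z)(Ŝf) (metaplectic covariance). -/

import Mathlib

open Matrix MeasureTheory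

/-- The Heisenberg–Weyl operator `T(z₀)`, `z₀ = (x₀, p₀)`, acting on functions `f : ℝⁿ → ℂ` by
`T(z₀)f(x) = exp(i(⟨p₀,x⟩ - ½⟨p₀,x₀⟩)) f(x - x₀)`. -/
noncomputable def heisenbergWeyl {n : ℕ} (z₀ : (Fin n → ℝ) × (Fin n → ℝ))
    (f : (Fin n → ℝ) → ℂ) : (Fin n → ℝ) → ℂ := fun x =>
  Complex.exp (Complex.I * ((z₀.2 ⬝ᵥ x : ℝ) - (1 / 2 : ℝ) * (z₀.2 ⬝ᵥ z₀.1 : ℝ)))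
    * f (x - z₀.1)

/-- The free symplectic matrix `S_W = [[L⁻¹Q, L⁻¹],[P L⁻¹ Q - Lᵀ, P L⁻¹]]`. -/
noncomputable def freeSymplectic {n : ℕ} (P L Q : Matrix (Fin n) (Fin n) ℝ) :
    Matrix (Fin n ⊕ Fin n) (Fin n ⊕ Fin n) ℝ :=
  Matrix.fromBlocks (L⁻¹ * Q) L⁻¹ (P * L⁻¹ * Q - Lᵀ) (P * L⁻¹)

/-- The action of a `2n × 2n` matrix on `ℝⁿ × ℝⁿ`. -/
def matAction {n : ℕ} (S : Matrix (Fin n ⊕ Fin n) (Fin n ⊕ Fin n) ℝ)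
    (z : (Fin n → ℝ) × (Fin n → ℝ)) : (Fin n → ℝ) × (Fin n → ℝ) :=
  (S.mulVec (Sum.elim z.1 z.2) ∘ Sum.inl, S.mulVec (Sum.elim z.1 z.2) ∘ Sum.inr)

/-- The quadratic form `W(x,x') = ½⟨Px,x⟩ - ⟨Lx,x'⟩ + ½⟨Qx',x'⟩`. -/
noncomputable def Wform {n : ℕ} (P L Q : Matrix (Fin n) (Fin n) ℝ)
    (x x' : Fin n → ℝ) : ℝ :=
  (1 / 2 : ℝ) * (P.mulVec x ⬝ᵥ x) - L.mulVec x ⬝ᵥ x' + (1 / 2 : ℝ) * (Q.mulVec x' ⬝ᵥ x')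

/-- The quadratic Fourier transform
`Ŝf(x) = c (2π)^{-n/2} |det L|^{1/2} ∫ e^{iW(x,x')} f(x') dx'`. -/
noncomputable def quadFourier {n : ℕ} (c : ℂ) (P L Q : Matrix (Fin n) (Fin n) ℝ)
    (f : (Fin n → ℝ) → ℂ) : (Fin n → ℝ) → ℂ := fun x =>
  c * ((2 * Real.pi) ^ (-(n : ℝ) / 2) : ℝ) * (Real.sqrt |L.det| : ℝ) *
    ∫ x' : Fin n → ℝ, Complex.exp (Complex.I * (Wform P L Q x x' : ℝ)) * f x'

/-! Substituting `x' ↦ x' + x₀` in the integral defining `Ŝ(T(z)f)(x)`, `z = (x₀, p₀)`, the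
symmetry of `P` and `Q` turns the phase `W(x, x' + x₀) + ⟨p₀, x' + x₀⟩ - ½⟨p₀, x₀⟩` into
`⟨b, x⟩ - ½⟨b, a⟩ + W(x - a, x')`, where `(a, b) = S_W z` is characterised by `L a = Q x₀ + p₀` and
`b = P a - Lᵀ x₀`. -/

namespace Matrix

variable {ι R : Type*} [Fintype ι] [CommSemiring R]

theorem transpose_mulVec_dotProduct (M : Matrix ι ι R) (u v : ι → R) :
    Mᵀ *ᵥ u ⬝ᵥ v = M *ᵥ v ⬝ᵥ u := by
  rw [mulVec_transpose, ← dotProduct_mulVec, dotProduct_comm]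

theorem mulVec_dotProduct_comm_of_transpose_eq {M : Matrix ι ι R} (hM : Mᵀ = M)
    (u v : ι → R) : M *ᵥ u ⬝ᵥ v = M *ᵥ v ⬝ᵥ u := by
  rw [← transpose_mulVec_dotProduct, hM]

end Matrix

section

variable {n : ℕ}

theorem matAction_freeSymplectic (P L Q : Matrix (Fin n) (Fin n) ℝ) (x₀ p₀ : Fin n → ℝ) :
    matAction (freeSymplectic P L Q) (x₀, p₀) =
      (L⁻¹ *ᵥ (Q *ᵥ x₀ + p₀), P *ᵥ (L⁻¹ *ᵥ (Q *ᵥ x₀ + p₀)) - Lᵀ *ᵥ x₀) := by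
  simp only [matAction, freeSymplectic, fromBlocks_mulVec, Sum.elim_comp_inl,
    Sum.elim_comp_inr, mulVec_add, sub_mulVec, mulVec_mulVec, Matrix.mul_assoc]
  abel_nf

theorem Wform_add_right_add_phase {P L Q : Matrix (Fin n) (Fin n) ℝ} (hP : Pᵀ = P) (hQ : Qᵀ = Q)
    {x₀ p₀ a : Fin n → ℝ} (ha : L *ᵥ a = Q *ᵥ x₀ + p₀) (x x' : Fin n → ℝ) :
    Wform P L Q x (x' + x₀) + (p₀ ⬝ᵥ (x' + x₀) - 1 / 2 * (p₀ ⬝ᵥ x₀)) =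
      ((P *ᵥ a - Lᵀ *ᵥ x₀) ⬝ᵥ x - 1 / 2 * ((P *ᵥ a - Lᵀ *ᵥ x₀) ⬝ᵥ a)) +
        Wform P L Q (x - a) x' := by
  have hQ_swap := mulVec_dotProduct_comm_of_transpose_eq hQ x₀ x'
  have hP_swap := mulVec_dotProduct_comm_of_transpose_eq hP a x
  have hL_x := transpose_mulVec_dotProduct L x₀ x
  have hL_a : Lᵀ *ᵥ x₀ ⬝ᵥ a = Q *ᵥ x₀ ⬝ᵥ x₀ + p₀ ⬝ᵥ x₀ := by
    rw [transpose_mulVec_dotProduct, ha, add_dotProduct]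
  have hL_x' : L *ᵥ a ⬝ᵥ x' = Q *ᵥ x₀ ⬝ᵥ x' + p₀ ⬝ᵥ x' := by
    rw [ha, add_dotProduct]
  simp only [Wform, mulVec_add, mulVec_sub, dotProduct_add, add_dotProduct, dotProduct_sub,
    sub_dotProduct]
  linarith

theorem integral_exp_Wform_mul_heisenbergWeyl {P L Q : Matrix (Fin n) (Fin n) ℝ} (hP : Pᵀ = P)
    (hQ : Qᵀ = Q) {x₀ p₀ a : Fin n → ℝ} (ha : L *ᵥ a = Q *ᵥ x₀ + p₀) (g : (Fin n → ℝ) → ℂ)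
    (x : Fin n → ℝ) :
    ∫ x', Complex.exp (Complex.I * (Wform P L Q x x' : ℝ)) * heisenbergWeyl (x₀, p₀) g x' =
      Complex.exp (Complex.I * (((P *ᵥ a - Lᵀ *ᵥ x₀) ⬝ᵥ x : ℝ) -
          (1 / 2 : ℝ) * ((P *ᵥ a - Lᵀ *ᵥ x₀) ⬝ᵥ a : ℝ))) *
        ∫ x', Complex.exp (Complex.I * (Wform P L Q (x - a) x' : ℝ)) * g x' := by
  rw [← integral_const_mul, ← integral_add_right_eq_self _ x₀]
  congr 1 with x'
  have hphase := congrArg (fun t : ℝ => Complex.exp (Complex.I * t))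
    (Wform_add_right_add_phase hP hQ ha x x')
  simp only [heisenbergWeyl, add_sub_cancel_right]
  push_cast at hphase ⊢
  rw [← mul_assoc, ← Complex.exp_add, ← mul_add, hphase, mul_add, Complex.exp_add, mul_assoc]

end

theorem quadFourier_metaplectic_covariance_general {n : ℕ} (P L Q : Matrix (Fin n) (Fin n) ℝ)
    (hP : Pᵀ = P) (hQ : Qᵀ = Q) (hL : L.det ≠ 0) (c : ℂ)
    (z : (Fin n → ℝ) × (Fin n → ℝ)) (f : SchwartzMap (Fin n → ℝ) ℂ) (x : Fin n → ℝ) :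
    quadFourier c P L Q (heisenbergWeyl z ⇑f) x
      = heisenbergWeyl (matAction (freeSymplectic P L Q) z) (quadFourier c P L Q ⇑f) x := by
  obtain ⟨x₀, p₀⟩ := z
  have ha : L *ᵥ (L⁻¹ *ᵥ (Q *ᵥ x₀ + p₀)) = Q *ᵥ x₀ + p₀ := by
    rw [mulVec_mulVec, mul_nonsing_inv L (isUnit_iff_ne_zero.mpr hL), one_mulVec]
  rw [matAction_freeSymplectic, quadFourier, integral_exp_Wform_mul_heisenbergWeyl hP hQ ha,
    heisenbergWeyl, quadFourier]
  ring

/-- metaplectic covariance `Ŝ(T(z)f) = T(S_W z)(Ŝf)` for Schwartz `f`. -/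
theorem quadFourier_metaplectic_covariance {n : ℕ} (P L Q : Matrix (Fin n) (Fin n) ℝ)
    (hP : Pᵀ = P) (hQ : Qᵀ = Q) (hL : L.det ≠ 0) (c : ℂ) (hc : ‖c‖ = 1)
    (z : (Fin n → ℝ) × (Fin n → ℝ)) (f : SchwartzMap (Fin n → ℝ) ℂ) (x : Fin n → ℝ) :
    quadFourier c P L Q (heisenbergWeyl z ⇑f) x
      = heisenbergWeyl (matAction (freeSymplectic P L Q) z) (quadFourier c P L Q ⇑f) x :=
  quadFourier_metaplectic_covariance_general P L Q hP hQ hL c z f x
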